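/- For every real number λ with λ ≠ 0 and λ ≠ 1, the 7-dimensional indecomposable 3-step nilpotent Lie algebra 147E(λ), with basis e₁,…,e₇ and structure equations de⁴ = e^{12}, de⁵ = e^{23}, de⁶ = −e^{13}, de⁷ = −e^{15}+λ·e^{26}+(1−λ)·e^{34} (all other de^i = 0), admits a purely coclosed G2-structure: there exists a basis f¹,…,f⁷ of its dual space such that the 4-form ∗φ = f^{1234}+f^{1256}+f^{1367}+f^{1457}+f^{2357}−f^{2467}+f^{3456} is d-closed and the 3-form φ = f^{127}+f^{347}+f^{567}+f^{135}−f^{146}−f^{236}−f^{245} satisfies φ ∧ dφ = 0. (Part of Theorem '3step-indecomposable-pure' of the paper; the structure is built from ω = e^{13}−e^{26}−e^{34}+e^{45} and ψ₋ = −e^{123}−2e^{125}−e^{146}+e^{245}+e^{356}.) -/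

import Mathlib

set_option synthInstance.maxHeartbeats 1000000
set_option maxHeartbeats 1000000

open ExteriorAlgebra Module

noncomputable section

/-- The degree-`k` homogeneous component of the exterior algebra of `V`. -/
def degPart (V : Type*) [AddCommGroup V] [Module ℝ V] (k : ℕ) :
    Submodule ℝ (ExteriorAlgebra ℝ V) :=
  LinearMap.range (ExteriorAlgebra.ι ℝ : V →ₗ[ℝ] ExteriorAlgebra ℝ V) ^ k

/-- `c` is the interior product (contraction) with the vector `X : V`, acting on the exterior
algebra `Λ V*` of the dual of `V`: it is an odd antiderivation which on a 1-form `α` gives the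
scalar `α(X)`. -/
def IsContraction {V : Type*} [AddCommGroup V] [Module ℝ V] (X : V)
    (c : ExteriorAlgebra ℝ (Dual ℝ V) →ₗ[ℝ] ExteriorAlgebra ℝ (Dual ℝ V)) : Prop :=
  (∀ k, ∀ x ∈ degPart (Dual ℝ V) k, ∀ y,
      c (x * y) = c x * y + ((-1 : ℝ)) ^ k • (x * c y)) ∧
  (∀ α : Dual ℝ V, c (ExteriorAlgebra.ι ℝ α) = algebraMap ℝ _ (α X))

variable {g : Type*} [LieRing g] [LieAlgebra ℝ g]

/-- `d` is the Chevalley–Eilenberg differential of `g` on `Λ g*`, expressed with respect to a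
basis `b` of `g`: it raises degree by one, is an odd derivation, and on 1-forms it is given by
`dα = -Σ_{i<j} α([b i, b j]) bⁱ ∧ bʲ` (which encodes `dα(x,y) = -α([x,y])`). -/
def IsCEDifferential {n : ℕ} (b : Basis (Fin n) ℝ g)
    (d : ExteriorAlgebra ℝ (Dual ℝ g) →ₗ[ℝ] ExteriorAlgebra ℝ (Dual ℝ g)) : Prop :=
  (∀ k, ∀ x ∈ degPart (Dual ℝ g) k, d x ∈ degPart (Dual ℝ g) (k + 1)) ∧
  (∀ k, ∀ x ∈ degPart (Dual ℝ g) k, ∀ y,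
      d (x * y) = d x * y + ((-1 : ℝ)) ^ k • (x * d y)) ∧
  (∀ α : Dual ℝ g, d (ExteriorAlgebra.ι ℝ α) =
    (-(2⁻¹ : ℝ)) • ∑ i, ∑ j, α ⁅b i, b j⁆ •
      (ExteriorAlgebra.ι ℝ (b.dualBasis i) * ExteriorAlgebra.ι ℝ (b.dualBasis j)))

/-- The 4-form `∗φ = e^{1234}+e^{1256}+e^{1367}+e^{1457}+e^{2357}-e^{2467}+e^{3456}` built out
of a family `f` of seven 1-forms (indexed from 0). -/
def starPhiForm {W : Type*} [AddCommGroup W] [Module ℝ W] (f : Fin 7 → W) :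
    ExteriorAlgebra ℝ W :=
  let e : Fin 7 → ExteriorAlgebra ℝ W := fun i => ExteriorAlgebra.ι ℝ (f i)
  e 0 * e 1 * e 2 * e 3 + e 0 * e 1 * e 4 * e 5 + e 0 * e 2 * e 5 * e 6 +
    e 0 * e 3 * e 4 * e 6 + e 1 * e 2 * e 4 * e 6 - e 1 * e 3 * e 5 * e 6 +
    e 2 * e 3 * e 4 * e 5

/-- The 3-form `φ = e^{127}+e^{347}+e^{567}+e^{135}-e^{146}-e^{236}-e^{245}` built out of a
family `f` of seven 1-forms (indexed from 0). -/
def phiG2Form {W : Type*} [AddCommGroup W] [Module ℝ W] (f : Fin 7 → W) :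
    ExteriorAlgebra ℝ W :=
  let e : Fin 7 → ExteriorAlgebra ℝ W := fun i => ExteriorAlgebra.ι ℝ (f i)
  e 0 * e 1 * e 6 + e 2 * e 3 * e 6 + e 4 * e 5 * e 6 + e 0 * e 2 * e 4 -
    e 0 * e 3 * e 5 - e 1 * e 2 * e 5 - e 1 * e 3 * e 4

/-- A 7-dimensional real Lie algebra admits a coclosed G₂-structure if there is a basis
`f¹,…,f⁷` of `g*` for which the 4-form `∗φ` is closed for the Chevalley–Eilenberg
differential. -/
def AdmitsCoclosedG2 (g : Type*) [LieRing g] [LieAlgebra ℝ g] : Prop :=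
  ∃ (b : Basis (Fin 7) ℝ g)
    (d : ExteriorAlgebra ℝ (Dual ℝ g) →ₗ[ℝ] ExteriorAlgebra ℝ (Dual ℝ g)),
    IsCEDifferential b d ∧
    ∃ f : Basis (Fin 7) ℝ (Dual ℝ g), d (starPhiForm fun i => f i) = 0

/-- A 7-dimensional real Lie algebra admits a purely coclosed G₂-structure if there is a basis
`f¹,…,f⁷` of `g*` for which `∗φ` is closed and moreover `φ ∧ dφ = 0`. -/
def AdmitsPurelyCoclosedG2 (g : Type*) [LieRing g] [LieAlgebra ℝ g] : Prop :=
  ∃ (b : Basis (Fin 7) ℝ g)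
    (d : ExteriorAlgebra ℝ (Dual ℝ g) →ₗ[ℝ] ExteriorAlgebra ℝ (Dual ℝ g)),
    IsCEDifferential b d ∧
    ∃ f : Basis (Fin 7) ℝ (Dual ℝ g),
      d (starPhiForm fun i => f i) = 0 ∧
      (phiG2Form fun i => f i) * d (phiG2Form fun i => f i) = 0

/-- A Lie algebra is decomposable if it is the direct sum of two nonzero ideals. -/
def Decomposable (g : Type*) [LieRing g] [LieAlgebra ℝ g] : Prop :=
  ∃ I J : LieIdeal ℝ g, I ≠ ⊥ ∧ J ≠ ⊥ ∧ I ⊓ J = ⊥ ∧ I ⊔ J = ⊤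

/-- Shorthand for the 1-form `eⁱ` (the `i`-th dual basis vector) in `Λ g*`. -/
def ef {g : Type*} [LieRing g] [LieAlgebra ℝ g] (b : Basis (Fin 7) ℝ g) (i : Fin 7) :
    ExteriorAlgebra ℝ (Dual ℝ g) :=
  ExteriorAlgebra.ι ℝ (b.dualBasis i)

/-! In the coframe `f = (e², -e⁶, e³ + e⁵, -e¹ - e⁴, -e⁵, -e¹, t e⁷ + s e⁶)` the first six
structure equations of `147E(λ)` no longer involve `λ`, and
`df⁷ = c₁₂ f¹² + c₃₄ f³⁴ + c₃₆ f³⁶ + c₄₅ f⁴⁵ + c₅₆ f⁵⁶`. For any coframe with these structure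
equations, `d∗φ = 0` follows from `c₃₆ + c₄₅ = -1` and `φ ∧ dφ = 0` from
`c₁₂ + c₃₄ + c₅₆ = 4`. For `147E(λ)` these sums are `2t(1 - λ) - s` and `t(1 - λ) - s`, so both
conditions hold for `t = 5/(λ - 1)` and `s = -9`. The two identities are checked by expanding
with the Leibniz rule and sorting wedge monomials. -/

namespace ExteriorAlgebra

variable {R M : Type*} [CommRing R] [AddCommGroup M] [Module R M]

theorem ι_mul_ι_mul_self (x : M) (z : ExteriorAlgebra R M) : ι R x * (ι R x * z) = 0 := by
  rw [← mul_assoc, ι_sq_zero, zero_mul]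

-- The order hypothesis orients these rewrites, so that `simp` sorts wedge monomials.
theorem ι_mul_ι_of_lt {n : ℕ} (f : Fin n → M) {i j : Fin n} (_ : i < j) :
    ι R (f j) * ι R (f i) = -(ι R (f i) * ι R (f j)) :=
  eq_neg_of_add_eq_zero_left (ι_add_mul_swap _ _)

theorem ι_mul_ι_mul_of_lt {n : ℕ} (f : Fin n → M) {i j : Fin n} (h : i < j)
    (z : ExteriorAlgebra R M) : ι R (f j) * (ι R (f i) * z) = -(ι R (f i) * (ι R (f j) * z)) := by
  rw [← mul_assoc, ι_mul_ι_of_lt f h, neg_mul, mul_assoc]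

end ExteriorAlgebra

theorem IsCEDifferential.map_ι_mul {n : ℕ} {b : Basis (Fin n) ℝ g}
    {d : ExteriorAlgebra ℝ (Dual ℝ g) →ₗ[ℝ] ExteriorAlgebra ℝ (Dual ℝ g)}
    (hd : IsCEDifferential b d) (α : Dual ℝ g) (y : ExteriorAlgebra ℝ (Dual ℝ g)) :
    d (ι ℝ α * y) = d (ι ℝ α) * y - ι ℝ α * d y := by
  have hα : ι ℝ α ∈ degPart (Dual ℝ g) 1 := by
    rw [degPart, pow_one]
    exact LinearMap.mem_range_self _ α
  rw [hd.2.1 1 _ hα y, pow_one, neg_one_smul, ← sub_eq_add_neg]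

section

variable {W : Type*} [AddCommGroup W] [Module ℝ W]
  {d : ExteriorAlgebra ℝ W →ₗ[ℝ] ExteriorAlgebra ℝ W} {f : Fin 7 → W}

-- The subscripts of the `c`'s are 1-based, as in the paper; the indices of `f` are 0-based.
def IsAdaptedCoframe (d : ExteriorAlgebra ℝ W →ₗ[ℝ] ExteriorAlgebra ℝ W) (f : Fin 7 → W)
    (c₁₂ c₃₄ c₃₆ c₄₅ c₅₆ : ℝ) : Prop :=
  let e : Fin 7 → ExteriorAlgebra ℝ W := fun i => ι ℝ (f i)
  d (e 0) = 0 ∧ d (e 1) = e 2 * e 5 + e 4 * e 5 ∧ d (e 2) = e 0 * e 2 + e 0 * e 4 ∧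
    d (e 3) = -(e 0 * e 5) ∧ d (e 4) = -(e 0 * e 2) - e 0 * e 4 ∧ d (e 5) = 0 ∧
    d (e 6) = c₁₂ • (e 0 * e 1) + c₃₄ • (e 2 * e 3) + c₃₆ • (e 2 * e 5) + c₄₅ • (e 3 * e 4) +
      c₅₆ • (e 4 * e 5)

namespace IsAdaptedCoframe

variable {c₁₂ c₃₄ c₃₆ c₄₅ c₅₆ : ℝ}

theorem d_starPhiForm_eq_zero (hf : IsAdaptedCoframe d f c₁₂ c₃₄ c₃₆ c₄₅ c₅₆)
    (hd : ∀ (α : W) y, d (ι ℝ α * y) = d (ι ℝ α) * y - ι ℝ α * d y)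
    (hc : c₃₆ + c₄₅ = -1) : d (starPhiForm f) = 0 := by
  obtain ⟨h0, h1, h2, h3, h4, h5, h6⟩ := hf
  obtain rfl : c₃₆ = -1 - c₄₅ := by linear_combination hc
  simp (disch := decide) only [starPhiForm, mul_assoc, map_add, map_sub, hd, h0, h1, h2, h3, h4,
    h5, h6, mul_add, add_mul, mul_sub, sub_mul, mul_neg, neg_mul, mul_smul_comm, mul_zero,
    zero_mul, ι_sq_zero, ι_mul_ι_mul_self, ι_mul_ι_of_lt f, ι_mul_ι_mul_of_lt f]
  module

theorem phiG2Form_mul_d_phiG2Form_eq_zero (hf : IsAdaptedCoframe d f c₁₂ c₃₄ c₃₆ c₄₅ c₅₆)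
    (hd : ∀ (α : W) y, d (ι ℝ α * y) = d (ι ℝ α) * y - ι ℝ α * d y)
    (hc : c₁₂ + c₃₄ + c₅₆ = 4) : phiG2Form f * d (phiG2Form f) = 0 := by
  obtain ⟨h0, h1, h2, h3, h4, h5, h6⟩ := hf
  obtain rfl : c₁₂ = 4 - c₃₄ - c₅₆ := by linear_combination hc
  simp (disch := decide) only [phiG2Form, mul_assoc, map_add, map_sub, hd, h0, h1, h2, h3, h4,
    h5, h6, mul_add, add_mul, mul_sub, sub_mul, mul_neg, neg_mul, mul_smul_comm, mul_zero,
    zero_mul, ι_sq_zero, ι_mul_ι_mul_self, ι_mul_ι_of_lt f, ι_mul_ι_mul_of_lt f]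
  module

end IsAdaptedCoframe

def Is147ECoframe (d : ExteriorAlgebra ℝ W →ₗ[ℝ] ExteriorAlgebra ℝ W) (f : Fin 7 → W)
    (lam : ℝ) : Prop :=
  let e : Fin 7 → ExteriorAlgebra ℝ W := fun i => ι ℝ (f i)
  d (e 0) = 0 ∧ d (e 1) = 0 ∧ d (e 2) = 0 ∧ d (e 3) = e 0 * e 1 ∧ d (e 4) = e 1 * e 2 ∧
    d (e 5) = -(e 0 * e 2) ∧
    d (e 6) = -(e 0 * e 4) + lam • (e 1 * e 5) + (1 - lam) • (e 2 * e 3)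

def adaptedCoframe (f : Fin 7 → W) (t s : ℝ) : Fin 7 → W :=
  ![f 1, -f 5, f 2 + f 4, -f 0 - f 3, -f 4, -f 0, t • f 6 + s • f 5]

theorem Is147ECoframe.isAdaptedCoframe_adaptedCoframe {lam : ℝ} (hf : Is147ECoframe d f lam)
    (t s : ℝ) :
    IsAdaptedCoframe d (adaptedCoframe f t s) (-(t * lam)) (t * (lam - 1)) (t * (1 - lam) - s)
      (t * (1 - lam)) (t * (2 - lam) - s) := by
  obtain ⟨h0, h1, h2, h3, h4, h5, h6⟩ := hf
  refine ⟨?_, ?_, ?_, ?_, ?_, ?_, ?_⟩ <;>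
  simp (disch := decide) only [adaptedCoframe, Matrix.cons_val, map_add, map_sub, map_neg,
    map_smul, h0, h1, h2, h3, h4, h5, h6, mul_add, add_mul, mul_sub, sub_mul, mul_neg, neg_mul,
    ι_mul_ι_of_lt f] <;>
  module

theorem range_subset_span_adaptedCoframe (f : Fin 7 → W) {t : ℝ} (ht : t ≠ 0) (s : ℝ) :
    Set.range f ⊆ Submodule.span ℝ (Set.range (adaptedCoframe f t s)) := by
  rintro _ ⟨i, rfl⟩
  have mem (j : Fin 7) :
      adaptedCoframe f t s j ∈ Submodule.span ℝ (Set.range (adaptedCoframe f t s)) :=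
    Submodule.subset_span ⟨j, rfl⟩
  fin_cases i
  · simpa [adaptedCoframe] using neg_mem (mem 5)
  · simpa [adaptedCoframe] using mem 0
  · simpa [adaptedCoframe] using add_mem (mem 2) (mem 4)
  · simpa [adaptedCoframe] using sub_mem (mem 5) (mem 3)
  · simpa [adaptedCoframe] using neg_mem (mem 4)
  · simpa [adaptedCoframe] using neg_mem (mem 1)
  · simpa [adaptedCoframe, ht] using
      Submodule.smul_mem _ t⁻¹ (add_mem (mem 6) (Submodule.smul_mem _ s (mem 1)))

end

theorem lie147E_purely_coclosed_general (lam : ℝ) (hlam1 : lam ≠ 1)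
    (b : Basis (Fin 7) ℝ g)
    (d : ExteriorAlgebra ℝ (Dual ℝ g) →ₗ[ℝ] ExteriorAlgebra ℝ (Dual ℝ g))
    (hd : IsCEDifferential b d)
    (h1 : d (ef b 0) = 0) (h2 : d (ef b 1) = 0) (h3 : d (ef b 2) = 0)
    (h4 : d (ef b 3) = ef b 0 * ef b 1)
    (h5 : d (ef b 4) = ef b 1 * ef b 2)
    (h6 : d (ef b 5) = -(ef b 0 * ef b 2))
    (h7 : d (ef b 6) = -(ef b 0 * ef b 4) + lam • (ef b 1 * ef b 5) +
      (1 - lam) • (ef b 2 * ef b 3)) :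
    ∃ f : Basis (Fin 7) ℝ (Dual ℝ g),
      d (starPhiForm fun i => f i) = 0 ∧
      (phiG2Form fun i => f i) * d (phiG2Form fun i => f i) = 0 := by
  have hlam : lam - 1 ≠ 0 := sub_ne_zero.mpr hlam1
  set t := 5 / (lam - 1)
  have ht : t * (lam - 1) = 5 := div_mul_cancel₀ 5 hlam
  have hf : IsAdaptedCoframe d (adaptedCoframe b.dualBasis t (-9)) _ _ _ _ _ :=
    Is147ECoframe.isAdaptedCoframe_adaptedCoframe ⟨h1, h2, h3, h4, h5, h6, h7⟩ t (-9)
  have hspan : ⊤ ≤ Submodule.span ℝ (Set.range (adaptedCoframe b.dualBasis t (-9))) := by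
    rw [← b.dualBasis.span_eq, Submodule.span_le]
    exact range_subset_span_adaptedCoframe b.dualBasis (div_ne_zero (by norm_num) hlam) _
  refine ⟨basisOfTopLeSpanOfCardEqFinrank _ hspan (finrank_eq_card_basis b.dualBasis).symm,
    ?_, ?_⟩
  · rw [coe_basisOfTopLeSpanOfCardEqFinrank]
    exact hf.d_starPhiForm_eq_zero hd.map_ι_mul (by linear_combination -2 * ht)
  · rw [coe_basisOfTopLeSpanOfCardEqFinrank]
    exact hf.phiG2Form_mul_d_phiG2Form_eq_zero hd.map_ι_mul (by linear_combination -ht)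

/-- For every real `λ ∉ {0,1}`, the Lie algebra `147E(λ)` (`de⁴ = e^{12}`,
`de⁵ = e^{23}`, `de⁶ = -e^{13}`, `de⁷ = -e^{15} + λ e^{26} + (1-λ) e^{34}`, all other
`deⁱ = 0`) admits a purely coclosed G₂-structure: there is a basis `f¹,…,f⁷` of its dual space
with `d(∗φ) = 0` and `φ ∧ dφ = 0`. -/
theorem lie147E_purely_coclosed (lam : ℝ) (hlam0 : lam ≠ 0) (hlam1 : lam ≠ 1)
    (b : Basis (Fin 7) ℝ g)
    (d : ExteriorAlgebra ℝ (Dual ℝ g) →ₗ[ℝ] ExteriorAlgebra ℝ (Dual ℝ g))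
    (hd : IsCEDifferential b d)
    (h1 : d (ef b 0) = 0) (h2 : d (ef b 1) = 0) (h3 : d (ef b 2) = 0)
    (h4 : d (ef b 3) = ef b 0 * ef b 1)
    (h5 : d (ef b 4) = ef b 1 * ef b 2)
    (h6 : d (ef b 5) = -(ef b 0 * ef b 2))
    (h7 : d (ef b 6) = -(ef b 0 * ef b 4) + lam • (ef b 1 * ef b 5) +
      (1 - lam) • (ef b 2 * ef b 3)) :
    ∃ f : Basis (Fin 7) ℝ (Dual ℝ g),
      d (starPhiForm fun i => f i) = 0 ∧
      (phiG2Form fun i => f i) * d (phiG2Form fun i => f i) = 0 :=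
  lie147E_purely_coclosed_general lam hlam1 b d hd h1 h2 h3 h4 h5 h6 h7
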